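/- arXiv:2602.12632 — 6 statements merged into one kernel-verified Lean document; each statement's English description precedes it below -/
import Mathlib

section
/- For every integer n ≥ 1 and every instance 1 ≥ x_1 ≥ x_2 ≥ … ≥ x_n ≥ 0, the pricing curve with threshold function f(t) = 1 − t has regret at most 1/4; that is, x_1 minus the expected value received by the algorithm (the expectation taken over the i.i.d. uniform arrival times) is at most 1/4. -/
open MeasureTheory

/-- The value received by the pricing-curve algorithm with threshold function `f` on the
instance `x`, when value `x i` arrives at time `t i`: it receives `x i` for the index `i`
with the smallest arrival time among all indices `j` with `x j ≥ f (t j)`, and `0` if no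
index clears the threshold. -/
noncomputable def pricingReceived {n : ℕ} (f : ℝ → ℝ) (x t : Fin n → ℝ) : ℝ :=
  if h : (Finset.univ.filter fun j : Fin n => f (t j) ≤ x j).Nonempty then
    x (Classical.choose (Finset.exists_min_image _ t h))
  else 0

/-- The regret of the pricing curve with threshold function `f` on the instance
`x 0 ≥ x 1 ≥ … ≥ x n`: the top value `x 0` minus the expected received value, where the
arrival times are i.i.d. uniform on `[0,1]`. -/
noncomputable def pricingRegret {n : ℕ} (f : ℝ → ℝ) (x : Fin (n + 1) → ℝ) : ℝ :=
  x 0 - ∫ t in Set.univ.pi (fun _ : Fin (n + 1) => Set.Icc (0 : ℝ) 1), pricingReceived f x t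

/-!
Condition on the arrival times `r` of all values but the top one `x 0`, and let `s ≤ 1` be the
first time one of them clears the threshold (`s = 1` if none does). Whatever the arrival time `u`
of `x 0`, the algorithm stops by time `s` and anything it accepts at time `τ` is worth at least
`1 - τ`, so it receives at least `1 - s`; and if `u ∈ [1 - x 0, s)` it receives `x 0`, which
exceeds `1 - s` by `a = s - (1 - x 0)`, the length of that window. Integrating over `u`, the
expected value is at least `1 - s + a² = x 0 - a + a² ≥ x 0 - 1/4`.

Ties between arrival times have probability zero; off them, the received value (defined through an
arbitrary choice among tied minima) is a measurable sum of indicators, hence integrable.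
-/

open Set Finset

section Received

variable {n : ℕ} {f : ℝ → ℝ} {x t : Fin n → ℝ}

theorem pricingReceived_cases (f : ℝ → ℝ) (x t : Fin n → ℝ) :
    ((∀ j, x j < f (t j)) ∧ pricingReceived f x t = 0) ∨
      ∃ i, f (t i) ≤ x i ∧ (∀ j, f (t j) ≤ x j → t i ≤ t j) ∧ pricingReceived f x t = x i := by
  unfold pricingReceived
  split_ifs with h
  · obtain ⟨hi, hmin⟩ := Classical.choose_spec (exists_min_image _ t h)
    exact .inr ⟨_, (mem_filter.1 hi).2, fun j hj => hmin j (by simpa using hj), rfl⟩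
  · exact .inl ⟨fun j => not_le.1 fun hj => h ⟨j, by simpa using hj⟩, rfl⟩

theorem pricingReceived_nonneg (hx : ∀ i, 0 ≤ x i) : 0 ≤ pricingReceived f x t := by
  rcases pricingReceived_cases f x t with ⟨-, h⟩ | ⟨i, -, -, h⟩ <;> rw [h]
  exact hx i

theorem abs_pricingReceived_le_sum : |pricingReceived f x t| ≤ ∑ i, |x i| := by
  rcases pricingReceived_cases f x t with ⟨-, h⟩ | ⟨i, -, -, h⟩ <;> rw [h]
  · simpa using sum_nonneg fun i _ => abs_nonneg (x i)
  · exact single_le_sum (fun j _ => abs_nonneg (x j)) (mem_univ i)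

theorem le_pricingReceived (hf : Antitone f) {j : Fin n} (hj : f (t j) ≤ x j) :
    f (t j) ≤ pricingReceived f x t := by
  rcases pricingReceived_cases f x t with ⟨hnone, -⟩ | ⟨i, hi, hmin, h⟩
  · exact absurd hj (hnone j).not_ge
  · exact h ▸ (hf (hmin j hj)).trans hi

theorem pricingReceived_eq_of_forall_lt {i : Fin n} (hi : f (t i) ≤ x i)
    (hfirst : ∀ j ≠ i, f (t j) ≤ x j → t i < t j) : pricingReceived f x t = x i := by
  rcases pricingReceived_cases f x t with ⟨hnone, -⟩ | ⟨k, hk, hmin, h⟩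
  · exact absurd hi (hnone i).not_ge
  · obtain rfl : k = i := by_contra fun hki => (hfirst k hki hk).not_ge (hmin i hi)
    exact h

def pricingWinSet (f : ℝ → ℝ) (x : Fin n → ℝ) (i : Fin n) : Set (Fin n → ℝ) :=
  {t | f (t i) ≤ x i ∧ ∀ j ≠ i, f (t j) ≤ x j → t i < t j}

theorem measurableSet_pricingWinSet (hf : Measurable f) (x : Fin n → ℝ) (i : Fin n) :
    MeasurableSet (pricingWinSet f x i) := by
  have hclear : ∀ j, MeasurableSet {t : Fin n → ℝ | f (t j) ≤ x j} := fun j =>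
    measurableSet_le (hf.comp (measurable_pi_apply j)) measurable_const
  simp only [pricingWinSet, ofPred_and, ofPred_forall]
  exact (hclear i).inter <| .iInter fun j => .iInter fun _ =>
    (hclear j).imp (measurableSet_lt (measurable_pi_apply i) (measurable_pi_apply j))

theorem pricingReceived_eq_sum_indicator (ht : Function.Injective t) :
    pricingReceived f x t = ∑ i, (pricingWinSet f x i).indicator (fun _ => x i) t := by
  rcases pricingReceived_cases f x t with ⟨hnone, h⟩ | ⟨i, hi, hmin, h⟩
  · refine h.trans (sum_eq_zero fun i _ => indicator_of_notMem ?_ _).symm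
    exact fun hwin => (hnone i).not_ge hwin.1
  · have hwin : t ∈ pricingWinSet f x i :=
      ⟨hi, fun j hji hj => (hmin j hj).lt_of_ne (ht.ne hji.symm)⟩
    rw [h, sum_eq_single i, indicator_of_mem hwin]
    · exact fun k _ hki => indicator_of_notMem
        (fun hk => (hk.2 i hki.symm hi).not_gt (hwin.2 k hki hk.1)) _
    · exact fun hi' => absurd (Finset.mem_univ i) hi'

end Received

section Measure

open ProbabilityTheory

variable {ι α : Type*} [Fintype ι] [MeasurableSpace α]

theorem measure_pi_setOf_apply_eq_apply [MeasurableEq α] (μ : ι → Measure α)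
    [∀ i, IsProbabilityMeasure (μ i)] [∀ i, NullSingletonClass (μ i)] {i j : ι} (hij : i ≠ j) :
    Measure.pi μ {t | t i = t j} = 0 := by
  have hmeas : Measurable fun t : ι → α => (t i, t j) :=
    (measurable_pi_apply i).prodMk (measurable_pi_apply j)
  have hind : IndepFun (fun t : ι → α => t i) (fun t => t j) (Measure.pi μ) :=
    (iIndepFun_pi (μ := μ) (X := fun _ => (id : α → α)) fun _ => aemeasurable_id).indepFun hij
  have hmap := hind.map_prod_eq_prod_map_map (measurable_pi_apply i).aemeasurable
    (measurable_pi_apply j).aemeasurable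
  rw [(measurePreserving_eval μ i).map_eq, (measurePreserving_eval μ j).map_eq] at hmap
  change Measure.pi μ ((fun t : ι → α => (t i, t j)) ⁻¹' diagonal α) = 0
  rw [← Measure.map_apply hmeas measurableSet_diagonal, hmap,
    Measure.measure_prod_null measurableSet_diagonal]
  exact ae_of_all _ fun a => by simp [Set.preimage, diagonal]

theorem ae_injective_pi [MeasurableEq α] (μ : ι → Measure α)
    [∀ i, IsProbabilityMeasure (μ i)] [∀ i, NullSingletonClass (μ i)] :
    ∀ᵐ t ∂Measure.pi μ, Function.Injective t := by
  have htie : ∀ i j, ∀ᵐ t ∂Measure.pi μ, t i = t j → i = j := fun i j => by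
    by_cases hij : i = j
    · exact ae_of_all _ fun _ _ => hij
    · exact ae_iff.2 <| measure_mono_null (fun t ht => (Classical.not_imp.1 ht).1)
        (measure_pi_setOf_apply_eq_apply μ hij)
  simpa only [Function.Injective, ae_all_iff] using htie

theorem aestronglyMeasurable_pricingReceived {n : ℕ} {f : ℝ → ℝ} (hf : Measurable f)
    (x : Fin n → ℝ) (μ : Fin n → Measure ℝ) [∀ i, IsProbabilityMeasure (μ i)]
    [∀ i, NullSingletonClass (μ i)] :
    AEStronglyMeasurable (pricingReceived f x) (Measure.pi μ) :=
  (Finset.measurable_sum _ fun i _ => measurable_const.indicator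
    (measurableSet_pricingWinSet hf x i)).aestronglyMeasurable.congr <| by
      filter_upwards [ae_injective_pi μ] with t ht using (pricingReceived_eq_sum_indicator ht).symm

theorem integrable_pricingReceived {n : ℕ} {f : ℝ → ℝ} (hf : Measurable f)
    (x : Fin n → ℝ) (μ : Fin n → Measure ℝ) [∀ i, IsProbabilityMeasure (μ i)]
    [∀ i, NullSingletonClass (μ i)] :
    Integrable (pricingReceived f x) (Measure.pi μ) :=
  .of_bound (aestronglyMeasurable_pricingReceived hf x μ) _ <|
    ae_of_all _ fun _ => (Real.norm_eq_abs _).trans_le abs_pricingReceived_le_sum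

theorem le_integral_pi_of_le_integral_cons {n : ℕ} (ν : Measure α) [IsProbabilityMeasure ν]
    {g : (Fin (n + 1) → α) → ℝ} (hg : Integrable g (Measure.pi fun _ => ν)) {c : ℝ}
    (hc : ∀ r, Integrable (fun u => g (Fin.cons u r)) ν → c ≤ ∫ u, g (Fin.cons u r) ∂ν) :
    c ≤ ∫ t, g t ∂Measure.pi fun _ => ν := by
  have hmp := (measurePreserving_piFinSuccAbove (fun _ : Fin (n + 1) => ν) 0).symm
  have hcons : ∀ p : α × (Fin n → α),
      (MeasurableEquiv.piFinSuccAbove (fun _ => α) 0).symm p = Fin.cons p.1 p.2 := fun p => by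
    simp [MeasurableEquiv.piFinSuccAbove_symm_apply, Fin.insertNthEquiv, Fin.insertNth_zero']
  have hg' : Integrable (fun p : α × (Fin n → α) => g (Fin.cons p.1 p.2))
      (ν.prod (Measure.pi fun _ => ν)) := by
    simpa only [Function.comp_def, hcons] using hmp.integrable_comp_of_integrable hg
  calc c = ∫ _ : Fin n → α, c ∂Measure.pi fun _ => ν := by simp
    _ ≤ ∫ r, ∫ u, g (Fin.cons u r) ∂ν ∂Measure.pi fun _ => ν :=
      integral_mono_ae (integrable_const c) hg'.integral_prod_right <| by
        filter_upwards [hg'.prod_left_ae] with r hr using hc r hr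
    _ = ∫ p, g (Fin.cons p.1 p.2) ∂ν.prod (Measure.pi fun _ => ν) :=
      (integral_prod_symm _ hg').symm
    _ = ∫ t, g t ∂Measure.pi fun _ => ν := by
      simpa only [hcons] using hmp.integral_comp' (g := g)

end Measure

instance : IsProbabilityMeasure (volume.restrict (Icc (0 : ℝ) 1)) := ⟨by simp⟩

section OneSub

variable {n : ℕ} {x : Fin (n + 1) → ℝ}

theorem sub_add_indicator_le_pricingReceived_cons (hx : ∀ i, 0 ≤ x i) {r : Fin n → ℝ} {s : ℝ}
    (hs : IsLeast (insert 1 (r '' {j | 1 - r j ≤ x j.succ})) s) (u : ℝ) :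
    1 - s + (Ico (1 - x 0) s).indicator (fun _ => x 0 - (1 - s)) u ≤
      pricingReceived (fun v => 1 - v) x (Fin.cons u r) := by
  by_cases hu : u ∈ Ico (1 - x 0) s
  · rw [indicator_of_mem hu, pricingReceived_eq_of_forall_lt (i := 0)
      (by simpa using sub_le_comm.1 hu.1)]
    · exact (add_sub_cancel _ _).le
    · intro j hj0 hj
      obtain ⟨k, rfl⟩ := Fin.exists_succ_eq.2 hj0
      simp only [Fin.cons_zero, Fin.cons_succ] at hj ⊢
      exact hu.2.trans_le (hs.2 (mem_insert_of_mem _ (mem_image_of_mem r hj)))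
  · rw [indicator_of_notMem hu, add_zero]
    rcases hs.1 with rfl | ⟨j, hj, rfl⟩
    · simpa using pricingReceived_nonneg hx
    · simpa using le_pricingReceived (t := Fin.cons u r) (j := j.succ)
        (fun a b hab => sub_le_sub_left hab 1) (by simpa using hj)

theorem sub_quarter_le_integral_pricingReceived_cons (hanti : Antitone x) (hx1 : x 0 ≤ 1)
    (hx : ∀ i, 0 ≤ x i) (r : Fin n → ℝ)
    (hint : Integrable (fun u => pricingReceived (fun v => 1 - v) x (Fin.cons u r))
      (volume.restrict (Icc 0 1))) :
    x 0 - 1 / 4 ≤ ∫ u in Icc 0 1, pricingReceived (fun v => 1 - v) x (Fin.cons u r) := by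
  set S := insert 1 (r '' {j | 1 - r j ≤ x j.succ})
  obtain ⟨s, hs⟩ : ∃ s, IsLeast S s :=
    ⟨_, (insert_nonempty _ _).csInf_mem (toFinite S), fun _ h => csInf_le (toFinite S).bddBelow h⟩
  have hs1 : s ≤ 1 := hs.2 (mem_insert 1 _)
  have hs0 : 1 - x 0 ≤ s := by
    rcases hs.1 with rfl | ⟨j, hj : 1 - r j ≤ x j.succ, rfl⟩
    · linarith [hx 0]
    · linarith [hanti (Fin.zero_le j.succ)]
  have hIco : Ico (1 - x 0) s ⊆ Icc 0 1 := fun u hu => ⟨by linarith [hu.1], by linarith [hu.2]⟩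
  have hφ : ∫ u in Icc 0 1, 1 - s + (Ico (1 - x 0) s).indicator (fun _ => x 0 - (1 - s)) u =
      1 - s + (x 0 - (1 - s)) * (s - (1 - x 0)) := by
    rw [integral_add (integrable_const _) ((integrable_const _).indicator measurableSet_Ico),
      integral_const, integral_indicator_const _ measurableSet_Ico,
      measureReal_restrict_apply measurableSet_Ico, inter_eq_left.2 hIco,
      Real.volume_real_Ico_of_le hs0]
    simp only [probReal_univ, smul_eq_mul, one_mul]
    ring
  calc x 0 - 1 / 4 ≤ 1 - s + (x 0 - (1 - s)) * (s - (1 - x 0)) := by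
        nlinarith [sq_nonneg (s - (1 - x 0) - 1 / 2)]
    _ = _ := hφ.symm
    _ ≤ _ := integral_mono ((integrable_const _).add
        ((integrable_const _).indicator measurableSet_Ico)) hint
        (sub_add_indicator_le_pricingReceived_cons hx hs)

end OneSub

/-- For every instance `1 ≥ x_1 ≥ x_2 ≥ … ≥ x_n ≥ 0` (with `n ≥ 1` values), the pricing
curve with threshold function `f(t) = 1 - t` has regret at most `1/4`. -/
theorem pricing_curve_one_sub_regret_le_quarter (n : ℕ) (x : Fin (n + 1) → ℝ)
    (hanti : Antitone x) (hx1 : x 0 ≤ 1) (hx0 : 0 ≤ x (Fin.last n)) :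
    pricingRegret (fun t => 1 - t) x ≤ 1 / 4 := by
  have hx : ∀ i, 0 ≤ x i := fun i => hx0.trans (hanti (Fin.le_last i))
  have hvol : volume.restrict (univ.pi fun _ : Fin (n + 1) => Icc (0 : ℝ) 1) =
      Measure.pi fun _ => volume.restrict (Icc 0 1) := by
    rw [volume_pi, Measure.restrict_pi_pi]
  rw [pricingRegret, hvol, sub_le_comm]
  exact le_integral_pi_of_le_integral_cons _
    (integrable_pricingReceived (measurable_const.sub measurable_id) x _)
    (sub_quarter_le_integral_pricingReceived_cons hanti hx1 hx)
end

section
/- Let f : [0,1] → [0,1] be continuous and strictly decreasing with f(0) = 1, and for v ∈ [f(1),1] let g(v) = inf{t ∈ [0,1] : v ≥ f(t)}. Let n ≥ 2 and let 1 ≥ x_1 > x_2 > … > x_n = f(1) be pairwise distinct values, and set θ_i = g(x_i) (so θ_n = 1). Then the regret of the best-only pricing curve with threshold f on this instance equals x_1·θ_1 + Σ_{i=2}^{n−1} (x_1 − x_i)·(1/i)·(1 − θ_i)^i − Σ_{i=2}^{n−1} (x_1 − x_i)·Σ_{k=i+1}^{n−1} (1/(k−1) − 1/k)·(1 − θ_k)^k.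 -/
/-!
Number the values so that `x 1 > ⋯ > x n`, and say that value `i` *fires* if it arrives after
its threshold time `θ i` and before all of `x 1, …, x (i-1)`. A firing index arrives before every
smaller one, so the algorithm accepts the largest firing index. Arrival times are a.s. distinct
and exchangeable, hence for `j < k`, on the event "`k` is accepted" (symmetric in the indices
`≤ j`), `j` is the earliest of `1, …, j` with probability `1/j`; there `j` fires automatically
because `θ` is increasing. The same symmetry gives `P(j fires) = (1 - θ j)^j / j`. Splitting
"`j` fires" according to the accepted index yields the triangular system
`j p_j + ∑_{k>j} p_k = (1 - θ j)^j` for the acceptance probabilities `p_j`. For the tail sums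
`T_j = ∑_{k ≥ j} p_k` it reads `T_j/(j-1) - T_{j+1}/j = (1/(j-1) - 1/j) (1 - θ j)^j`, which
telescopes to the closed form; `θ n = 1` removes the last terms.
-/

open MeasureTheory

/-- The value received by the best-only pricing-curve algorithm with threshold function `f`
on the instance `x`, when value `x i` arrives at time `t i`: it accepts (and receives) the
value `x i` with the smallest arrival time among all indices `i` satisfying both
`x i ≥ f (t i)` and `x i > x j` for every `j` arriving before `i`; it receives `0` if no
index qualifies. -/
noncomputable def bestOnlyReceived {n : ℕ} (f : ℝ → ℝ) (x t : Fin n → ℝ) : ℝ :=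
  if h : (Finset.univ.filter fun i : Fin n =>
      f (t i) ≤ x i ∧ ∀ j, t j < t i → x j < x i).Nonempty then
    x (Classical.choose (Finset.exists_min_image _ t h))
  else 0

open Set Function
open scoped ENNReal

namespace BestOnly

section Symmetry

variable {ι : Type*}

def IsStrictArgminOn (s : Finset ι) (t : ι → ℝ) (j : ι) : Prop :=
  ∀ i ∈ s, i ≠ j → t j < t i

lemma isStrictArgminOn_comp_iff {s : Finset ι} {σ : Equiv.Perm ι} (hσ : ∀ i, σ i ∈ s ↔ i ∈ s)
    (t : ι → ℝ) (j : ι) : IsStrictArgminOn s (t ∘ σ) j ↔ IsStrictArgminOn s t (σ j) := by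
  constructor
  · intro h i hi hij
    simpa using h (σ.symm i) ((hσ _).1 (by simpa using hi)) fun h' => hij (by simp [← h'])
  · intro h i hi hij
    exact h (σ i) ((hσ i).2 hi) (σ.injective.ne hij)

variable [DecidableEq ι] in
lemma swap_apply_mem_iff {s : Finset ι} {r j : ι} (hr : r ∈ s) (hj : j ∈ s)
    (i : ι) : Equiv.swap r j i ∈ s ↔ i ∈ s := by
  rw [Equiv.swap_apply_def]
  split_ifs with h₁ h₂ <;> simp_all

variable [Fintype ι]

lemma volume_setOf_apply_eq_apply {i j : ι} (hij : i ≠ j) :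
    volume {t : ι → ℝ | t i = t j} = 0 := by
  classical
  let L : (ι → ℝ) →ₗ[ℝ] ℝ := LinearMap.proj (R := ℝ) (φ := fun _ : ι => ℝ) i - LinearMap.proj j
  have hker : {t : ι → ℝ | t i = t j} = (LinearMap.ker L : Set (ι → ℝ)) := by
    ext t
    simp [L, sub_eq_zero]
  rw [hker]
  refine Measure.addHaar_submodule _ _ fun htop => ?_
  have hsingle : Pi.single i (1 : ℝ) ∈ LinearMap.ker L := htop ▸ Submodule.mem_top
  simp [L, hij.symm] at hsingle

lemma ae_injective : ∀ᵐ t : ι → ℝ, Injective t := by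
  have hpair : ∀ i j : ι, ∀ᵐ t : ι → ℝ, t i = t j → i = j := by
    intro i j
    by_cases hij : i = j
    · exact .of_forall fun _ _ => hij
    · exact ae_iff.2 <| measure_mono_null (fun t ht => (Classical.not_imp.1 ht).1)
        (volume_setOf_apply_eq_apply hij)
  exact (ae_all_iff.2 fun i => ae_all_iff.2 (hpair i)).mono fun t ht i j => ht i j

lemma measurePreserving_comp_perm (σ : Equiv.Perm ι) :
    MeasurePreserving (fun t : ι → ℝ => t ∘ σ) := by
  have h : (fun t : ι → ℝ => t ∘ σ) = MeasurableEquiv.piCongrLeft (fun _ => ℝ) σ.symm := by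
    ext t i
    rw [MeasurableEquiv.coe_piCongrLeft]
    simpa using (Equiv.piCongrLeft_apply_apply (fun _ : ι => ℝ) σ.symm t (σ i)).symm
  rw [h]
  exact volume_measurePreserving_piCongrLeft _ _

lemma measurableSet_setOf_isStrictArgminOn (s : Finset ι) (j : ι) :
    MeasurableSet {t : ι → ℝ | IsStrictArgminOn s t j} := by
  simp only [IsStrictArgminOn]
  measurability

theorem volume_eq_card_mul_volume_inter_isStrictArgminOn [DecidableEq ι] {S : Set (ι → ℝ)}
    (hS : MeasurableSet S) {s : Finset ι} {j : ι} (hj : j ∈ s)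
    (hswap : ∀ r ∈ s, ∀ t : ι → ℝ, t ∘ Equiv.swap r j ∈ S ↔ t ∈ S) :
    volume S = s.card * volume (S ∩ {t | IsStrictArgminOn s t j}) := by
  set A : ι → Set (ι → ℝ) := fun r => S ∩ {t | IsStrictArgminOn s t r}
  have hA : ∀ r, MeasurableSet (A r) := fun r =>
    hS.inter (measurableSet_setOf_isStrictArgminOn s r)
  have hdisj : (s : Set ι).PairwiseDisjoint A := fun r hr r' hr' hne =>
    Set.disjoint_left.2 fun t ht ht' => (ht.2 r' hr' hne.symm).asymm (ht'.2 r hr hne)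
  have hcover : S =ᵐ[volume] ⋃ r ∈ s, A r := by
    filter_upwards [ae_injective] with t ht
    refine propext ⟨fun htS => ?_, fun htA => ?_⟩
    · obtain ⟨r, hr, hmin⟩ := s.exists_min_image t ⟨j, hj⟩
      exact mem_biUnion hr ⟨htS, fun i hi hir => (hmin i hi).lt_of_ne (ht.ne hir.symm)⟩
    · obtain ⟨r, -, htr⟩ := mem_iUnion₂.1 htA
      exact htr.1
  have hA_eq : ∀ r ∈ s, volume (A r) = volume (A j) := by
    intro r hr
    have hpre : (fun t => t ∘ Equiv.swap r j) ⁻¹' A j = A r := by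
      ext t
      simp [A, hswap r hr, isStrictArgminOn_comp_iff (swap_apply_mem_iff hr hj)]
    rw [← hpre, (measurePreserving_comp_perm _).measure_preimage (hA j).nullMeasurableSet]
  rw [measure_congr hcover, measure_biUnion_finset hdisj fun r _ => hA r,
    Finset.sum_congr rfl hA_eq, Finset.sum_const, nsmul_eq_mul]

end Symmetry

section Acceptance

variable {n : ℕ} (τ : Fin n → ℝ)

def unitCube (n : ℕ) : Set (Fin n → ℝ) := univ.pi fun _ => Icc 0 1

/-- Indices are sorted by decreasing value, so `j` fires when it arrives after its threshold
time `τ j` and before every larger value. -/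
def Fires (j : Fin n) : Set (Fin n → ℝ) :=
  {t | τ j ≤ t j ∧ IsStrictArgminOn (Finset.Iic j) t j}

/-- A firing index arrives before every smaller index, so the earliest firing index, which the
algorithm accepts, is the largest one. -/
def Accepts (j : Fin n) : Set (Fin n → ℝ) :=
  {t | t ∈ unitCube n ∧ t ∈ Fires τ j ∧ ∀ k, j < k → t ∉ Fires τ k}

lemma measurableSet_fires (j : Fin n) : MeasurableSet (Fires τ j) :=
  (measurableSet_le measurable_const (measurable_pi_apply j)).inter
    (measurableSet_setOf_isStrictArgminOn _ j)

lemma measurableSet_accepts (j : Fin n) : MeasurableSet (Accepts τ j) := by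
  have h : Accepts τ j = unitCube n ∩ Fires τ j ∩ ⋂ k, ⋂ (_ : j < k), (Fires τ k)ᶜ := by
    ext t
    simp only [Accepts, mem_ofPred_eq, mem_inter_iff, mem_iInter, mem_compl_iff, and_assoc]
  rw [h]
  exact ((MeasurableSet.univ_pi fun _ => measurableSet_Icc).inter (measurableSet_fires τ j)).inter
    (.iInter fun k => .iInter fun _ => (measurableSet_fires τ k).compl)

omit τ in
lemma volume_unitCube : volume (unitCube n) = 1 := by
  rw [unitCube, volume_pi_pi]
  simp

lemma volume_accepts_ne_top (j : Fin n) : volume (Accepts τ j) ≠ ⊤ :=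
  ne_top_of_le_ne_top (by simp [volume_unitCube])
    (measure_mono fun t (ht : t ∈ Accepts τ j) => ht.1)

lemma pairwise_disjoint_accepts : Pairwise (Disjoint on Accepts τ) := by
  intro j k hjk
  rcases lt_or_gt_of_ne hjk with h | h
  · exact Set.disjoint_left.2 fun t htj htk => htj.2.2 k h htk.2.1
  · exact Set.disjoint_left.2 fun t htj htk => htk.2.2 j h htj.2.1

lemma exists_mem_accepts_of_mem_fires {t : Fin n → ℝ} (ht : t ∈ unitCube n) {j : Fin n}
    (hj : t ∈ Fires τ j) : ∃ k, j ≤ k ∧ t ∈ Accepts τ k := by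
  classical
  obtain ⟨k, hk, hmax⟩ :=
    (Finset.univ.filter fun k => t ∈ Fires τ k).exists_max_image id ⟨j, by simpa using hj⟩
  simp only [Finset.mem_filter, Finset.mem_univ, true_and, id] at hk hmax
  exact ⟨k, hmax j hj, ht, hk, fun l hkl hl => (hmax l hl).not_gt hkl⟩

lemma unitCube_inter_fires_eq_biUnion (j : Fin n) :
    unitCube n ∩ Fires τ j = ⋃ k ∈ Finset.Ici j, Fires τ j ∩ Accepts τ k := by
  ext t
  simp only [mem_inter_iff, mem_iUnion, Finset.mem_Ici, exists_prop]
  constructor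
  · rintro ⟨ht, hj⟩
    obtain ⟨k, hjk, hk⟩ := exists_mem_accepts_of_mem_fires τ ht hj
    exact ⟨k, hjk, hj, hk⟩
  · rintro ⟨k, -, hj, hk⟩
    exact ⟨hk.1, hj⟩

lemma comp_perm_mem_unitCube_iff (σ : Equiv.Perm (Fin n)) (t : Fin n → ℝ) :
    t ∘ σ ∈ unitCube n ↔ t ∈ unitCube n := by
  simp only [unitCube, mem_univ_pi, comp_apply]
  exact ⟨fun h i => by simpa using h (σ.symm i), fun h i => h (σ i)⟩

lemma comp_swap_mem_fires_iff {r j l : Fin n} (hr : r < l) (hj : j < l) (t : Fin n → ℝ) :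
    t ∘ Equiv.swap r j ∈ Fires τ l ↔ t ∈ Fires τ l := by
  have hl : Equiv.swap r j l = l := Equiv.swap_apply_of_ne_of_ne hr.ne' hj.ne'
  have hmem := swap_apply_mem_iff (Finset.mem_Iic.2 hr.le) (Finset.mem_Iic.2 hj.le)
  simp only [Fires, mem_ofPred_eq, isStrictArgminOn_comp_iff hmem, comp_apply, hl]

lemma comp_swap_mem_accepts_iff {r j k : Fin n} (hr : r < k) (hj : j < k) (t : Fin n → ℝ) :
    t ∘ Equiv.swap r j ∈ Accepts τ k ↔ t ∈ Accepts τ k := by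
  have hfires : ∀ l, k ≤ l → (t ∘ Equiv.swap r j ∈ Fires τ l ↔ t ∈ Fires τ l) := fun l hl =>
    comp_swap_mem_fires_iff τ (hr.trans_le hl) (hj.trans_le hl) t
  simp only [Accepts, mem_ofPred_eq, comp_perm_mem_unitCube_iff, hfires k le_rfl]
  exact and_congr_right' <| and_congr_right' <|
    forall_congr' fun l => imp_congr_right fun hl => not_congr (hfires l hl.le)

lemma volume_pi_Icc_ite_le {a : ℝ} (ha : a ≤ 1) (j : Fin n) :
    volume (univ.pi fun i => Icc (if i ≤ j then a else 0) (1 : ℝ))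
      = ENNReal.ofReal ((1 - a) ^ ((j : ℕ) + 1)) := by
  rw [volume_pi_pi]
  simp only [Real.volume_Icc, apply_ite, sub_zero, ENNReal.ofReal_one]
  rw [Finset.prod_ite, Finset.prod_const, Finset.prod_const_one, mul_one, Finset.filter_ge_eq_Iic,
    Fin.card_Iic, ENNReal.ofReal_pow (by linarith)]

variable {τ}

lemma card_mul_volume_unitCube_inter_fires {j : Fin n} (hτ : τ j ∈ Icc (0 : ℝ) 1) :
    ((j : ℕ) + 1 : ℝ≥0∞) * volume (unitCube n ∩ Fires τ j)
      = ENNReal.ofReal ((1 - τ j) ^ ((j : ℕ) + 1)) := by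
  classical
  set S : Set (Fin n → ℝ) := univ.pi fun i => Icc (if i ≤ j then τ j else 0) 1
  have hS_inter : S ∩ {t | IsStrictArgminOn (Finset.Iic j) t j} = unitCube n ∩ Fires τ j := by
    ext t
    simp only [S, unitCube, Fires, mem_inter_iff, mem_univ_pi, mem_ofPred_eq]
    constructor
    · rintro ⟨hS, hmin⟩
      refine ⟨fun i => ⟨le_trans ?_ (hS i).1, (hS i).2⟩, by simpa using (hS j).1, hmin⟩
      split_ifs <;> linarith [hτ.1]
    · rintro ⟨hcube, hj, hmin⟩
      refine ⟨fun i => ⟨?_, (hcube i).2⟩, hmin⟩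
      split_ifs with hij
      · rcases hij.lt_or_eq with h | rfl
        · exact hj.trans (hmin i (Finset.mem_Iic.2 hij) h.ne).le
        · exact hj
      · exact (hcube i).1
  have hswap : ∀ r ∈ Finset.Iic j, ∀ t : Fin n → ℝ, t ∘ Equiv.swap r j ∈ S ↔ t ∈ S := by
    intro r hr t
    have hle : ∀ i, Equiv.swap r j i ≤ j ↔ i ≤ j := by
      simpa using swap_apply_mem_iff hr (Finset.mem_Iic.2 le_rfl)
    simp only [S, mem_univ_pi, comp_apply]
    exact (Equiv.swap r j).forall_congr (by simp [hle])
  rw [← volume_pi_Icc_ite_le hτ.2 j, volume_eq_card_mul_volume_inter_isStrictArgminOn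
    (MeasurableSet.univ_pi fun _ => measurableSet_Icc) (Finset.mem_Iic.2 le_rfl) hswap,
    hS_inter, Fin.card_Iic]
  push_cast
  rfl

lemma card_mul_volume_fires_inter_accepts (hτ : Monotone τ) {j k : Fin n} (hjk : j < k) :
    ((j : ℕ) + 1 : ℝ≥0∞) * volume (Fires τ j ∩ Accepts τ k) = volume (Accepts τ k) := by
  have hinter :
      Accepts τ k ∩ {t | IsStrictArgminOn (Finset.Iic j) t j} = Fires τ j ∩ Accepts τ k := by
    ext t
    constructor
    · rintro ⟨hk, hmin⟩
      have htk : t k < t j := hk.2.1.2 j (Finset.mem_Iic.2 hjk.le) hjk.ne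
      exact ⟨⟨(hτ hjk.le).trans (hk.2.1.1.trans htk.le), hmin⟩, hk⟩
    · rintro ⟨hj, hk⟩
      exact ⟨hk, hj.2⟩
  rw [volume_eq_card_mul_volume_inter_isStrictArgminOn (measurableSet_accepts τ k)
    (Finset.mem_Iic.2 le_rfl) fun r hr t =>
      comp_swap_mem_accepts_iff τ ((Finset.mem_Iic.1 hr).trans_lt hjk) hjk t,
    hinter, Fin.card_Iic]
  push_cast
  rfl

lemma volume_accepts_recursion (hmono : Monotone τ) {j : Fin n} (hτ : τ j ∈ Icc (0 : ℝ) 1) :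
    ((j : ℕ) + 1 : ℝ≥0∞) * volume (Accepts τ j) + ∑ k ∈ Finset.Ioi j, volume (Accepts τ k)
      = ENNReal.ofReal ((1 - τ j) ^ ((j : ℕ) + 1)) := by
  classical
  have hdisj : ((Finset.Ici j : Finset (Fin n)) : Set (Fin n)).PairwiseDisjoint
      fun k => Fires τ j ∩ Accepts τ k := fun k _ l _ hkl =>
    (pairwise_disjoint_accepts τ hkl).mono inter_subset_right inter_subset_right
  rw [← card_mul_volume_unitCube_inter_fires hτ, unitCube_inter_fires_eq_biUnion,
    measure_biUnion_finset hdisj fun k _ =>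
      (measurableSet_fires τ j).inter (measurableSet_accepts τ k),
    ← Finset.Ioi_insert, Finset.sum_insert (by simp), mul_add, Finset.mul_sum,
    inter_eq_right.2 fun t ht => ht.2.1]
  exact congrArg _ (Finset.sum_congr rfl fun k hk =>
    (card_mul_volume_fires_inter_accepts hmono (Finset.mem_Ioi.1 hk)).symm)

lemma measureReal_accepts_recursion (hmono : Monotone τ) (hτ : ∀ j, τ j ∈ Icc (0 : ℝ) 1)
    (j : Fin n) :
    ((j : ℕ) + 1 : ℝ) * volume.real (Accepts τ j) + ∑ k ∈ Finset.Ioi j, volume.real (Accepts τ k)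
      = (1 - τ j) ^ ((j : ℕ) + 1) := by
  have hfin := volume_accepts_ne_top τ
  have h := congrArg ENNReal.toReal (volume_accepts_recursion hmono (hτ j))
  rw [ENNReal.toReal_add (ENNReal.mul_ne_top (by simp) (hfin j))
      (ENNReal.sum_ne_top.2 fun k _ => hfin k), ENNReal.toReal_mul,
    ENNReal.toReal_sum fun k _ => hfin k,
    ENNReal.toReal_ofReal (pow_nonneg (by linarith [(hτ j).2]) _)] at h
  have hcast : ((j : ℕ) + 1 : ℝ≥0∞).toReal = (j : ℕ) + 1 := by norm_cast
  simpa only [measureReal_def, hcast] using h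

end Acceptance

section Received

variable {n : ℕ} {f : ℝ → ℝ} {x y τ t : Fin n → ℝ}

lemma bestOnlyReceived_eq_of_forall_le (hinj : Injective t) {k : Fin n}
    (hk : f (t k) ≤ x k ∧ ∀ j, t j < t k → x j < x k)
    (hmin : ∀ i, f (t i) ≤ x i ∧ (∀ j, t j < t i → x j < x i) → t k ≤ t i) :
    bestOnlyReceived f x t = x k := by
  have hne : (Finset.univ.filter fun i : Fin n =>
      f (t i) ≤ x i ∧ ∀ j, t j < t i → x j < x i).Nonempty := ⟨k, by simpa using hk⟩
  rw [bestOnlyReceived, dif_pos hne]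
  obtain ⟨hmem, hle⟩ := Classical.choose_spec (Finset.exists_min_image _ t hne)
  exact congrArg x <| hinj <|
    le_antisymm (hle k (by simpa using hk)) (hmin _ (by simpa using hmem))

lemma bestOnlyReceived_eq_zero (h : ∀ i, ¬(f (t i) ≤ x i ∧ ∀ j, t j < t i → x j < x i)) :
    bestOnlyReceived f x t = 0 := by
  rw [bestOnlyReceived, dif_neg]
  simpa [Finset.Nonempty] using h

variable (hy : StrictAnti y) (hthr : ∀ j, ∀ s ∈ Icc (0 : ℝ) 1, f s ≤ y j ↔ τ j ≤ s)
include hy hthr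

lemma bestOnly_condition_iff_mem_fires (ht : t ∈ unitCube n) (hinj : Injective t) (i : Fin n) :
    (f (t i) ≤ y i ∧ ∀ j, t j < t i → y j < y i) ↔ t ∈ Fires τ i := by
  refine and_congr (hthr i (t i) (ht i trivial)) ⟨fun h j hj hji => ?_, fun h j hj => ?_⟩
  · refine (lt_or_gt_of_ne (hinj.ne hji)).resolve_left fun hlt => ?_
    exact (hy.lt_iff_gt.1 (h j hlt)).not_ge (Finset.mem_Iic.1 hj)
  · refine hy (lt_of_not_ge fun hji => ?_)
    rcases hji.lt_or_eq with hlt | rfl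
    · exact (h j (Finset.mem_Iic.2 hji) hlt.ne).asymm hj
    · exact lt_irrefl _ hj

lemma bestOnlyReceived_eq_sum_indicator (ht : t ∈ unitCube n) (hinj : Injective t) :
    bestOnlyReceived f y t = ∑ j, (Accepts τ j).indicator (fun _ => y j) t := by
  have hP := bestOnly_condition_iff_mem_fires hy hthr ht hinj
  by_cases hacc : ∃ k, t ∈ Accepts τ k
  · obtain ⟨k, hk⟩ := hacc
    rw [Finset.sum_eq_single k (fun j _ hjk => indicator_of_notMem
      (Set.disjoint_right.1 (pairwise_disjoint_accepts τ hjk) hk) _) (by simp),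
      indicator_of_mem hk]
    refine bestOnlyReceived_eq_of_forall_le hinj ((hP k).2 hk.2.1) fun i hi => ?_
    rcases lt_trichotomy i k with hik | rfl | hki
    · exact (hk.2.1.2 i (Finset.mem_Iic.2 hik.le) hik.ne).le
    · exact le_rfl
    · exact absurd ((hP i).1 hi) (hk.2.2 i hki)
  · push Not at hacc
    rw [Finset.sum_eq_zero fun j _ => indicator_of_notMem (hacc j) _]
    refine bestOnlyReceived_eq_zero fun i hi => ?_
    obtain ⟨k, -, hk⟩ := exists_mem_accepts_of_mem_fires τ ht ((hP i).1 hi)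
    exact hacc k hk

instance : IsFiniteMeasure (volume.restrict (unitCube n)) :=
  ⟨by simp [volume_unitCube]⟩

theorem integral_bestOnlyReceived :
    ∫ t in unitCube n, bestOnlyReceived f y t = ∑ j, y j * volume.real (Accepts τ j) := by
  have hae : (fun t => bestOnlyReceived f y t) =ᵐ[volume.restrict (unitCube n)]
      fun t => ∑ j, (Accepts τ j).indicator (fun _ => y j) t := by
    filter_upwards [ae_restrict_of_ae ae_injective,
      ae_restrict_mem (MeasurableSet.univ_pi fun _ => measurableSet_Icc)] with t hinj ht
    exact bestOnlyReceived_eq_sum_indicator hy hthr ht hinj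
  rw [integral_congr_ae hae, integral_finsetSum _ fun j _ =>
    (integrable_const (y j)).indicator (measurableSet_accepts τ j)]
  refine Finset.sum_congr rfl fun j _ => ?_
  rw [integral_indicator_const _ (measurableSet_accepts τ j), smul_eq_mul, mul_comm,
    measureReal_restrict_apply (measurableSet_accepts τ j), inter_eq_left.2 fun t ht => ht.1]

end Received

section Threshold

variable {f : ℝ → ℝ} {v : ℝ}

lemma isLeast_sInf_setOf_le (hcont : ContinuousOn f (Icc 0 1)) (hv : f 1 ≤ v) :
    IsLeast {t ∈ Icc (0 : ℝ) 1 | f t ≤ v} (sInf {t ∈ Icc (0 : ℝ) 1 | f t ≤ v}) := by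
  have hclosed : IsClosed {t ∈ Icc (0 : ℝ) 1 | f t ≤ v} :=
    hcont.preimage_isClosed_of_isClosed isClosed_Icc isClosed_Iic
  have hbdd : BddBelow {t ∈ Icc (0 : ℝ) 1 | f t ≤ v} := ⟨0, fun t ht => ht.1.1⟩
  exact ⟨hclosed.csInf_mem ⟨1, ⟨zero_le_one, le_rfl⟩, hv⟩ hbdd, fun t ht => csInf_le hbdd ht⟩

lemma le_iff_sInf_setOf_le (hcont : ContinuousOn f (Icc 0 1))
    (hanti : StrictAntiOn f (Icc 0 1)) (hv : f 1 ≤ v) {s : ℝ} (hs : s ∈ Icc (0 : ℝ) 1) :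
    f s ≤ v ↔ sInf {t ∈ Icc (0 : ℝ) 1 | f t ≤ v} ≤ s :=
  have h := isLeast_sInf_setOf_le hcont hv
  ⟨fun hfs => h.2 ⟨hs, hfs⟩, fun hle => (hanti.antitoneOn h.1.1 hs hle).trans h.1.2⟩

lemma sInf_setOf_le_apply_one (hcont : ContinuousOn f (Icc 0 1))
    (hanti : StrictAntiOn f (Icc 0 1)) : sInf {t ∈ Icc (0 : ℝ) 1 | f t ≤ f 1} = 1 :=
  have h := isLeast_sInf_setOf_le hcont le_rfl
  le_antisymm h.1.1.2 ((hanti.le_iff_ge h.1.1 ⟨zero_le_one, le_rfl⟩).1 h.1.2)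

end Threshold

section Recursion

lemma sum_univ_fin_eq_sum_Icc (F : ℕ → ℝ) (n : ℕ) :
    ∑ j : Fin n, F (j + 1) = ∑ i ∈ Finset.Icc 1 n, F i := by
  rw [Fin.sum_univ_eq_sum_range (fun j => F (j + 1)), Finset.range_eq_Ico, Finset.sum_Ico_add',
    Finset.Ico_add_one_right_eq_Icc]

lemma sum_Ioi_fin_eq_sum_Icc (F : ℕ → ℝ) {n : ℕ} (j : Fin n) :
    ∑ k ∈ Finset.Ioi j, F (k + 1) = ∑ i ∈ Finset.Icc ((j : ℕ) + 2) n, F i := by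
  calc ∑ k ∈ Finset.Ioi j, F (k + 1)
      = ∑ m ∈ (Finset.Ioi j).map Fin.valEmbedding, F (m + 1) := by
        rw [Finset.sum_map]
        rfl
    _ = ∑ i ∈ Finset.Icc ((j : ℕ) + 2) n, F i := by
      rw [Fin.map_valEmbedding_Ioi, ← Finset.Ico_add_one_left_eq_Ioo, Finset.sum_Ico_add',
        Finset.Ico_add_one_right_eq_Icc]

def SolvesTriangularSystem (N : ℕ) (C P : ℕ → ℝ) : Prop :=
  ∀ i ∈ Finset.Icc 1 N, (i : ℝ) * P i + ∑ k ∈ Finset.Icc (i + 1) N, P k = C i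

lemma exists_solvesTriangularSystem_of_fin {n : ℕ} {q : Fin n → ℝ} {C : ℕ → ℝ}
    (h : ∀ j : Fin n, ((j : ℕ) + 1 : ℝ) * q j + ∑ k ∈ Finset.Ioi j, q k = C (j + 1)) :
    ∃ P : ℕ → ℝ, (∀ j : Fin n, P (j + 1) = q j) ∧ SolvesTriangularSystem n C P := by
  set P : ℕ → ℝ := fun i => if hi : i - 1 < n then q ⟨i - 1, hi⟩ else 0
  have hP : ∀ j : Fin n, P (j + 1) = q j := fun j => by simp [P]
  refine ⟨P, hP, fun i hi => ?_⟩
  obtain ⟨j, rfl⟩ : ∃ j : Fin n, (j : ℕ) + 1 = i :=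
    ⟨⟨i - 1, by grind⟩, by grind⟩
  rw [← sum_Ioi_fin_eq_sum_Icc, ← h j, hP]
  simp only [hP]
  push_cast
  rfl

variable {P C : ℕ → ℝ} {N : ℕ}

lemma SolvesTriangularSystem.of_last_eq_zero (hrec : SolvesTriangularSystem (N + 1) C P)
    (hC : C (N + 1) = 0) : P (N + 1) = 0 ∧ SolvesTriangularSystem N C P := by
  have hlast : P (N + 1) = 0 := by
    simpa [hC, Nat.cast_add_one_ne_zero] using hrec (N + 1) (by simp)
  refine ⟨hlast, fun i hi => ?_⟩
  have h := hrec i (Finset.Icc_subset_Icc_right (by omega) hi)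
  rwa [Finset.sum_Icc_succ_top (by grind), hlast, add_zero] at h

variable (hrec : SolvesTriangularSystem N C P)
include hrec

lemma SolvesTriangularSystem.sum_Icc_eq {i : ℕ} (hi : 2 ≤ i) :
    ∑ k ∈ Finset.Icc i N, P k
      = (i - 1 : ℝ) * ∑ k ∈ Finset.Icc i N, (1 / ((k : ℝ) - 1) - 1 / k) * C k := by
  induction h : N + 1 - i generalizing i with
  | zero => simp [Finset.Icc_eq_empty_of_lt (show N < i by omega)]
  | succ d ih =>
    have hiN : i ≤ N := by omega
    have hr := hrec i (Finset.mem_Icc.2 ⟨by omega, hiN⟩)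
    have ih' := ih (i := i + 1) (by omega) (by omega)
    rw [← Finset.insert_Icc_add_one_left_eq_Icc hiN, Finset.sum_insert (by simp),
      Finset.sum_insert (by simp)]
    rw [ih'] at hr ⊢
    push_cast at hr ⊢
    have hi0 : (i : ℝ) ≠ 0 := Nat.cast_ne_zero.2 (by omega)
    have hi1 : (i : ℝ) - 1 ≠ 0 := by
      rw [sub_ne_zero, Ne, Nat.cast_eq_one]
      omega
    field_simp
    linear_combination hr

lemma SolvesTriangularSystem.eq {i : ℕ} (hi : i ∈ Finset.Icc 2 N) :
    P i = 1 / i * C i - ∑ k ∈ Finset.Icc (i + 1) N, (1 / ((k : ℝ) - 1) - 1 / k) * C k := by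
  rw [Finset.mem_Icc] at hi
  have hr := hrec i (Finset.mem_Icc.2 ⟨by omega, hi.2⟩)
  rw [hrec.sum_Icc_eq (i := i + 1) (by omega)] at hr
  push_cast at hr
  have hi0 : (i : ℝ) ≠ 0 := Nat.cast_ne_zero.2 (by omega)
  field_simp
  linear_combination hr

lemma SolvesTriangularSystem.sub_sum_mul_eq (x : ℕ → ℝ) (hN : 1 ≤ N) :
    x 1 - ∑ i ∈ Finset.Icc 1 N, x i * P i
      = x 1 * (1 - C 1) + ∑ i ∈ Finset.Icc 2 N, (x 1 - x i) * P i := by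
  have h1 := hrec 1 (Finset.mem_Icc.2 ⟨le_rfl, hN⟩)
  rw [← Finset.insert_Icc_add_one_left_eq_Icc hN, Finset.sum_insert (by simp)]
  simp only [sub_mul, Finset.sum_sub_distrib, ← Finset.mul_sum]
  push_cast at h1
  linear_combination (-x 1) * h1

end Recursion

end BestOnly

open BestOnly

theorem bestOnly_regret_formula_general (f : ℝ → ℝ)
    (hcont : ContinuousOn f (Set.Icc 0 1)) (hanti : StrictAntiOn f (Set.Icc 0 1))
    (n : ℕ) (hn : 2 ≤ n) (x : ℕ → ℝ)
    (hxanti : StrictAntiOn x (Set.Icc 1 n)) (hxn : x n = f 1)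
    (g : ℝ → ℝ) (hg : ∀ v, g v = sInf {t ∈ Set.Icc (0 : ℝ) 1 | f t ≤ v})
    (θ : ℕ → ℝ) (hθ : ∀ i, θ i = g (x i)) :
    x 1 - (∫ t in Set.univ.pi (fun _ : Fin n => Set.Icc (0 : ℝ) 1),
        bestOnlyReceived f (fun j : Fin n => x ((j : ℕ) + 1)) t)
      = x 1 * θ 1
        + (∑ i ∈ Finset.Icc 2 (n - 1), (x 1 - x i) * (1 / (i : ℝ)) * (1 - θ i) ^ i)
        - ∑ i ∈ Finset.Icc 2 (n - 1), (x 1 - x i) *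
            ∑ k ∈ Finset.Icc (i + 1) (n - 1),
              (1 / ((k : ℝ) - 1) - 1 / (k : ℝ)) * (1 - θ k) ^ k := by
  obtain ⟨N, rfl⟩ : ∃ N, n = N + 1 := ⟨n - 1, by omega⟩
  set y : Fin (N + 1) → ℝ := fun j => x (j + 1)
  set τ : Fin (N + 1) → ℝ := fun j => θ (j + 1)
  have hy : StrictAnti y := fun i j hij =>
    hxanti ⟨by omega, by omega⟩ ⟨by omega, by omega⟩ (by simpa using hij)
  have hf1 : ∀ j, f 1 ≤ y j := fun j =>
    hxn ▸ hxanti.antitoneOn ⟨by omega, by omega⟩ ⟨by omega, le_rfl⟩ (by omega)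
  have hτ : ∀ j, τ j ∈ Icc (0 : ℝ) 1 := fun j => by
    simpa only [τ, hθ, hg] using (isLeast_sInf_setOf_le hcont (hf1 j)).1.1
  have hthr : ∀ j, ∀ s ∈ Icc (0 : ℝ) 1, f s ≤ y j ↔ τ j ≤ s := fun j s hs => by
    simpa only [τ, hθ, hg] using le_iff_sInf_setOf_le hcont hanti (hf1 j) hs
  have hmono : Monotone τ := fun j k hjk =>
    (hthr j _ (hτ k)).1 (((hthr k _ (hτ k)).2 le_rfl).trans (hy.antitone hjk))
  have hθ_last : θ (N + 1) = 1 := by rw [hθ, hxn, hg, sInf_setOf_le_apply_one hcont hanti]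
  obtain ⟨P, hPq, hrec⟩ :=
    exists_solvesTriangularSystem_of_fin (q := fun j => volume.real (Accepts τ j))
      (C := fun i => (1 - θ i) ^ i) (measureReal_accepts_recursion hmono hτ)
  obtain ⟨hP_last, hrecN⟩ := hrec.of_last_eq_zero (by simp [hθ_last])
  rw [show univ.pi _ = unitCube (N + 1) from rfl, integral_bestOnlyReceived hy hthr]
  simp only [← hPq, y]
  rw [sum_univ_fin_eq_sum_Icc (fun i => x i * P i), Finset.sum_Icc_succ_top (by omega), hP_last,
    mul_zero, add_zero, hrecN.sub_sum_mul_eq x (by omega), Nat.add_sub_cancel,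
    Finset.sum_congr rfl fun i hi => by rw [hrecN.eq hi]]
  simp only [mul_sub, Finset.sum_sub_distrib, pow_one, sub_sub_cancel, ← mul_assoc,
    add_sub_assoc]

/-- The regret of the best-only pricing curve with threshold `f`, continuous and strictly
decreasing with `f 0 = 1`, on an instance `1 ≥ x 1 > x 2 > … > x n = f 1` (1-indexed,
`n ≥ 2`) equals
`x₁·θ₁ + Σ_{i=2}^{n-1} (x₁-x_i)·(1/i)·(1-θ_i)^i
      - Σ_{i=2}^{n-1} (x₁-x_i)·Σ_{k=i+1}^{n-1} (1/(k-1)-1/k)·(1-θ_k)^k`,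
where `θ_i = g (x i)` and `g v = inf {t ∈ [0,1] : v ≥ f t}`. -/
theorem bestOnly_regret_formula (f : ℝ → ℝ)
    (hcont : ContinuousOn f (Set.Icc 0 1)) (hanti : StrictAntiOn f (Set.Icc 0 1))
    (hf0 : f 0 = 1) (hmap : ∀ t ∈ Set.Icc (0 : ℝ) 1, f t ∈ Set.Icc (0 : ℝ) 1)
    (n : ℕ) (hn : 2 ≤ n) (x : ℕ → ℝ) (hx1 : x 1 ≤ 1)
    (hxanti : StrictAntiOn x (Set.Icc 1 n)) (hxn : x n = f 1)
    (g : ℝ → ℝ) (hg : ∀ v, g v = sInf {t ∈ Set.Icc (0 : ℝ) 1 | f t ≤ v})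
    (θ : ℕ → ℝ) (hθ : ∀ i, θ i = g (x i)) :
    x 1 - (∫ t in Set.univ.pi (fun _ : Fin n => Set.Icc (0 : ℝ) 1),
        bestOnlyReceived f (fun j : Fin n => x ((j : ℕ) + 1)) t)
      = x 1 * θ 1
        + (∑ i ∈ Finset.Icc 2 (n - 1), (x 1 - x i) * (1 / (i : ℝ)) * (1 - θ i) ^ i)
        - ∑ i ∈ Finset.Icc 2 (n - 1), (x 1 - x i) *
            ∑ k ∈ Finset.Icc (i + 1) (n - 1),
              (1 / ((k : ℝ) - 1) - 1 / (k : ℝ)) * (1 - θ k) ^ k :=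
  bestOnly_regret_formula_general f hcont hanti n hn x hxanti hxn g hg θ hθ
end

section
/- For every integer j ≥ 1, with k = 400·j², one has Σ_{u=0}^{j−1} binom(4j, u) · binom(2k − 4j, k − u) ≤ (1/4) · binom(2k, k). -/
/-!
The terms `a u = C(4j, u) C(2k - 4j, k - u)` sum to `C(2k, k)` over `u ≤ 4j` (Vandermonde).
For `4j ≤ k` they are symmetric, `a (4j - u) = a u`, and increase on `[0, 2j]`. Monotonicity
bounds the sum over `u < j` by half the sum over `u < 2j`, and symmetry bounds the latter by half
the full sum.
-/

open Finset

section SymmetricUnimodal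

variable {M : Type*} [AddCommMonoid M] [PartialOrder M] [IsOrderedAddMonoid M] {f : ℕ → M}

theorem two_smul_sum_range_le_of_monotoneOn {m : ℕ} (hf : MonotoneOn f (Set.Iio (2 * m))) :
    2 • ∑ u ∈ range m, f u ≤ ∑ u ∈ range (2 * m), f u := by
  rw [two_smul, two_mul, sum_range_add]
  gcongr with u hu
  rw [mem_range] at hu
  exact hf (Set.mem_Iio.mpr (by omega)) (Set.mem_Iio.mpr (by omega)) (by omega)

theorem two_smul_sum_range_le_of_symmetric [CanonicallyOrderedAdd M] {m : ℕ}
    (hf : ∀ u ≤ 2 * m, f (2 * m - u) = f u) :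
    2 • ∑ u ∈ range m, f u ≤ ∑ u ∈ range (2 * m + 1), f u := by
  have upper_half : ∑ u ∈ range (m + 1), f (m + u) = ∑ u ∈ range (m + 1), f u := by
    rw [← sum_range_reflect f]
    refine sum_congr rfl fun u hu => ?_
    rw [mem_range] at hu
    rw [← hf (m + u) (by omega)]
    congr 1
    omega
  rw [two_smul, show 2 * m + 1 = m + (m + 1) by omega, sum_range_add, upper_half, sum_range_succ]
  exact add_le_add_right le_self_add _

theorem four_smul_sum_range_le_of_symmetric_of_monotoneOn [CanonicallyOrderedAdd M] {j : ℕ}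
    (hsymm : ∀ u ≤ 4 * j, f (4 * j - u) = f u) (hmono : MonotoneOn f (Set.Iio (2 * j))) :
    4 • ∑ u ∈ range j, f u ≤ ∑ u ∈ range (4 * j + 1), f u := by
  rw [show 4 * j = 2 * (2 * j) by ring] at hsymm ⊢
  calc 4 • ∑ u ∈ range j, f u = 2 • 2 • ∑ u ∈ range j, f u := by rw [smul_smul]; norm_num
    _ ≤ 2 • ∑ u ∈ range (2 * j), f u := by gcongr; exact two_smul_sum_range_le_of_monotoneOn hmono
    _ ≤ ∑ u ∈ range (2 * (2 * j) + 1), f u := two_smul_sum_range_le_of_symmetric hsymm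

end SymmetricUnimodal

/-- The number of `k`-subsets of a `2k`-set with `m` marked elements that contain exactly `u`
marked elements. -/
def hypergeomCount (m k u : ℕ) : ℕ := m.choose u * (2 * k - m).choose (k - u)

section hypergeomCount

variable {m k : ℕ}

theorem sum_range_hypergeomCount (hmk : m ≤ k) :
    ∑ u ∈ range (m + 1), hypergeomCount m k u = (2 * k).choose k := by
  rw [show 2 * k = m + (2 * k - m) by omega, Nat.add_choose_eq,
    Nat.sum_antidiagonal_eq_sum_range_succ_mk]
  refine sum_subset (range_subset_range.mpr (by omega)) fun u _ hu => ?_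
  rw [mem_range] at hu
  simp [hypergeomCount, Nat.choose_eq_zero_of_lt (show m < u by omega)]

theorem hypergeomCount_sub (hmk : m ≤ k) {u : ℕ} (hu : u ≤ m) :
    hypergeomCount m k (m - u) = hypergeomCount m k u := by
  rw [hypergeomCount, hypergeomCount, Nat.choose_symm hu,
    show k - (m - u) = 2 * k - m - (k - u) by omega, Nat.choose_symm (by omega)]

theorem hypergeomCount_le_succ (hmk : m ≤ k) {u : ℕ} (hu : 2 * (u + 1) ≤ m) :
    hypergeomCount m k u ≤ hypergeomCount m k (u + 1) := by
  have choose_m : m.choose (u + 1) * (u + 1) = m.choose u * (m - u) :=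
    Nat.choose_succ_right_eq m u
  have choose_rest : (2 * k - m).choose (k - u) * (k - u)
      = (2 * k - m).choose (k - (u + 1)) * (k - m + u + 1) := by
    rw [show k - u = k - (u + 1) + 1 by omega, Nat.choose_succ_right_eq]
    congr 1
    omega
  -- consecutive terms have ratio `(m - u) (k - u) / ((u + 1) (k - m + u + 1)) ≥ 1`
  refine Nat.le_of_mul_le_mul_right (c := (u + 1) * (k - m + u + 1)) ?_ (by positivity)
  calc hypergeomCount m k u * ((u + 1) * (k - m + u + 1))
      ≤ hypergeomCount m k u * ((m - u) * (k - u)) := by gcongr <;> omega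
    _ = m.choose u * (m - u) * ((2 * k - m).choose (k - u) * (k - u)) := by
      rw [hypergeomCount]; ring
    _ = hypergeomCount m k (u + 1) * ((u + 1) * (k - m + u + 1)) := by
      rw [← choose_m, choose_rest, hypergeomCount]; ring

theorem monotoneOn_hypergeomCount (hmk : m ≤ k) :
    MonotoneOn (hypergeomCount m k) (Set.Iic (m / 2)) :=
  monotoneOn_of_le_succ Set.ordConnected_Iic fun u _ _ hu =>
    hypergeomCount_le_succ hmk (by rw [Order.succ_eq_add_one, Set.mem_Iic] at hu; omega)

end hypergeomCount

theorem four_mul_sum_range_hypergeomCount_le {j k : ℕ} (hjk : 4 * j ≤ k) :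
    4 * ∑ u ∈ range j, hypergeomCount (4 * j) k u ≤ (2 * k).choose k := by
  rw [← sum_range_hypergeomCount hjk, ← smul_eq_mul]
  refine four_smul_sum_range_le_of_symmetric_of_monotoneOn (fun u hu => hypergeomCount_sub hjk hu)
    ((monotoneOn_hypergeomCount hjk).mono fun u hu => ?_)
  simp only [Set.mem_Iio, Set.mem_Iic] at hu ⊢
  omega

theorem few_halves_probability_le_quarter_general (j : ℕ) :
    (∑ u ∈ Finset.range j,
        (Nat.choose (4 * j) u : ℝ) * (Nat.choose (2 * (400 * j ^ 2) - 4 * j) (400 * j ^ 2 - u) : ℝ))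
      ≤ (1 / 4) * (Nat.choose (2 * (400 * j ^ 2)) (400 * j ^ 2) : ℝ) := by
  have key : (4 * ∑ u ∈ range j, hypergeomCount (4 * j) (400 * j ^ 2) u : ℝ)
      ≤ (2 * (400 * j ^ 2)).choose (400 * j ^ 2) := by
    exact_mod_cast four_mul_sum_range_hypergeomCount_le (by nlinarith)
  push_cast [hypergeomCount] at key
  linarith

/-- For every integer `j ≥ 1`, with `k = 400·j²`,
`Σ_{u=0}^{j-1} C(4j, u)·C(2k - 4j, k - u) ≤ (1/4)·C(2k, k)`. -/
theorem few_halves_probability_le_quarter (j : ℕ) (hj : 1 ≤ j) :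
    (∑ u ∈ Finset.range j,
        (Nat.choose (4 * j) u : ℝ) * (Nat.choose (2 * (400 * j ^ 2) - 4 * j) (400 * j ^ 2 - u) : ℝ))
      ≤ (1 / 4) * (Nat.choose (2 * (400 * j ^ 2)) (400 * j ^ 2) : ℝ) :=
  few_halves_probability_le_quarter_general j
end

section
/- For every integer j ≥ 1, with k = 400·j², one has Σ_{u = k/2 − 2j + 1}^{k/2 + 2j − 1} binom(k, u)² < 0.3 · binom(2k, k). -/
/-!
Put `m = k / 2 = 200 j²` and `C = C(2m, m)`. Each of the `4j - 1` window terms is at most `C²`.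
Conversely, the ratio `C(2m, m - i - 1) / C(2m, m - i) = (m - i) / (m + i + 1)` gives
`m C(2m, m ± i) ≥ (m - i(i + 1)) C`, so by Vandermonde
`m² C(2k, k) ≥ C² (m² + 2 Σ_{i=1}^{N} (m - i(i + 1))²)`. For `N = 13 j` the right side is a
polynomial in `j` exceeding `(4j - 1) m² C² / 0.3`.
-/

open Finset

namespace Nat

theorem sub_mul_centralBinom_le_mul_choose {m i : ℕ} (hi : i ≤ m) :
    ((m : ℝ) - i * (i + 1)) * m.centralBinom ≤ m * (2 * m).choose (m - i) := by
  induction i with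
  | zero => simp [centralBinom]
  | succ i ih =>
    have hrec : ((2 * m).choose (m - i) : ℝ) * (m - i) =
        (2 * m).choose (m - (i + 1)) * (m + i + 1) := by
      have h := choose_succ_right_eq (2 * m) (m - (i + 1))
      rw [show m - (i + 1) + 1 = m - i by omega,
        show 2 * m - (m - (i + 1)) = m + i + 1 by omega] at h
      rw [← Nat.cast_sub (by omega : i ≤ m)]
      exact_mod_cast h
    have him : (i : ℝ) + 1 ≤ m := by exact_mod_cast hi
    have hi0 : (0 : ℝ) ≤ i := i.cast_nonneg
    rw [← mul_le_mul_iff_of_pos_right (by positivity : (0 : ℝ) < m + i + 1)]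
    calc ((m : ℝ) - ↑(i + 1) * (↑(i + 1) + 1)) * m.centralBinom * (m + i + 1)
        = ((m : ℝ) - (i + 1) * (i + 2)) * (m + i + 1) * m.centralBinom := by push_cast; ring
      _ ≤ ((m : ℝ) - i * (i + 1)) * (m - i) * m.centralBinom :=
          mul_le_mul_of_nonneg_right (by nlinarith [pow_nonneg hi0 3]) (by positivity)
      _ = ((m : ℝ) - i * (i + 1)) * m.centralBinom * (m - i) := by ring
      _ ≤ m * (2 * m).choose (m - i) * (m - i) :=
          mul_le_mul_of_nonneg_right (ih (by omega)) (by linarith)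
      _ = m * (2 * m).choose (m - (i + 1)) * (m + i + 1) := by rw [mul_assoc, hrec, mul_assoc]

theorem sum_sq_choose_le_card_mul_centralBinom_sq (m : ℕ) (s : Finset ℕ) :
    ∑ u ∈ s, ((2 * m).choose u : ℝ) ^ 2 ≤ #s * (m.centralBinom : ℝ) ^ 2 := by
  rw [← nsmul_eq_mul]
  refine sum_le_card_nsmul _ _ _ fun u _ => ?_
  gcongr
  exact_mod_cast choose_le_centralBinom u m

end Nat

theorem Finset.sum_Icc_sub_add_eq {M : Type*} [AddCommMonoid M] (f : ℕ → M) {m N : ℕ}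
    (h : N ≤ m) :
    ∑ u ∈ Icc (m - N) (m + N), f u = f m + ∑ i ∈ Icc 1 N, (f (m - i) + f (m + i)) := by
  induction N with
  | zero => simp
  | succ N ih =>
    have hIcc : Icc (m - (N + 1)) (m + (N + 1)) =
        insert (m - (N + 1)) (insert (m + (N + 1)) (Icc (m - N) (m + N))) := by
      ext x; simp only [mem_Icc, mem_insert]; omega
    rw [hIcc, sum_insert (by simp only [mem_insert, mem_Icc]; omega),
      sum_insert (by simp only [mem_Icc]; omega), ih (by omega), sum_Icc_succ_top (by omega)]
    abel

theorem sum_Icc_sq_sub_mul_succ (m : ℝ) (N : ℕ) :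
    ∑ i ∈ Icc 1 N, (m - i * (i + 1 : ℝ)) ^ 2 =
      N * m ^ 2 - 2 * m * (N * (N + 1) * (N + 2) / 3) +
        N * (N + 1) * (N + 2) * (3 * N ^ 2 + 6 * N + 1) / 15 := by
  induction N with
  | zero => simp
  | succ N ih =>
    rw [sum_Icc_succ_top (by omega), ih]
    push_cast
    ring

theorem sq_add_two_mul_sum_mul_centralBinom_sq_le {m N : ℕ} (hN : N * (N + 1) ≤ m) :
    ((m : ℝ) ^ 2 + 2 * ∑ i ∈ Icc 1 N, ((m : ℝ) - i * (i + 1)) ^ 2) *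
        (m.centralBinom : ℝ) ^ 2
      ≤ m ^ 2 * (2 * m).centralBinom := by
  set C : ℝ := (m.centralBinom : ℝ)
  have hNm : N ≤ m := le_trans (Nat.le_mul_of_pos_right N N.succ_pos) hN
  have hterm : ∀ i ∈ Icc 1 N, 2 * (((m : ℝ) - i * (i + 1)) * C) ^ 2 ≤
      (m : ℝ) ^ 2 *
        (((2 * m).choose (m - i) : ℝ) ^ 2 + ((2 * m).choose (m + i) : ℝ) ^ 2) := by
    intro i hi
    have hiN : i ≤ N := (mem_Icc.mp hi).2
    have hsymm : (2 * m).choose (m + i) = (2 * m).choose (m - i) := by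
      rw [← Nat.choose_symm (by omega), show 2 * m - (m + i) = m - i by omega]
    have him : ((i * (i + 1) : ℕ) : ℝ) ≤ m := by
      exact_mod_cast (Nat.mul_le_mul hiN (by omega)).trans hN
    push_cast at him
    have hpos : (0 : ℝ) ≤ ((m : ℝ) - i * (i + 1)) * C :=
      mul_nonneg (by linarith) (by positivity)
    have := pow_le_pow_left₀ hpos (Nat.sub_mul_centralBinom_le_mul_choose (hiN.trans hNm)) 2
    rw [hsymm]
    linarith [mul_pow (m : ℝ) ((2 * m).choose (m - i) : ℝ) 2]
  have hwide :
      ∑ u ∈ Icc (m - N) (m + N), ((2 * m).choose u : ℝ) ^ 2 ≤ (2 * m).centralBinom := by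
    rw [Nat.centralBinom, ← Nat.sum_range_choose_sq]
    push_cast
    exact sum_le_sum_of_subset_of_nonneg (fun x hx => by simp only [mem_Icc, mem_range] at *; omega)
      (fun _ _ _ => by positivity)
  calc ((m : ℝ) ^ 2 + 2 * ∑ i ∈ Icc 1 N, ((m : ℝ) - i * (i + 1)) ^ 2) * C ^ 2
      = (m : ℝ) ^ 2 * C ^ 2 + ∑ i ∈ Icc 1 N, 2 * (((m : ℝ) - i * (i + 1)) * C) ^ 2 := by
        simp only [add_mul, mul_assoc, sum_mul, mul_sum, mul_pow]
    _ ≤ (m : ℝ) ^ 2 * C ^ 2 + ∑ i ∈ Icc 1 N,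
          (m : ℝ) ^ 2 *
            (((2 * m).choose (m - i) : ℝ) ^ 2 + ((2 * m).choose (m + i) : ℝ) ^ 2) :=
        (add_le_add_iff_left _).2 (sum_le_sum hterm)
    _ = (m : ℝ) ^ 2 * ∑ u ∈ Icc (m - N) (m + N), ((2 * m).choose u : ℝ) ^ 2 := by
        rw [sum_Icc_sub_add_eq _ hNm, mul_add, mul_sum]; rfl
    _ ≤ m ^ 2 * (2 * m).centralBinom := by gcongr

theorem four_mul_sub_one_mul_sq_lt {j : ℕ} (hj : 1 ≤ j) :
    (4 * (j : ℝ) - 1) * (200 * j ^ 2) ^ 2 <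
      0.3 * ((200 * (j : ℝ) ^ 2) ^ 2 +
        2 * ∑ i ∈ Icc 1 (13 * j), (200 * (j : ℝ) ^ 2 - i * (i + 1)) ^ 2) := by
  have hx : (1 : ℝ) ≤ j := by exact_mod_cast hj
  rw [sum_Icc_sq_sub_mul_succ]
  push_cast
  nlinarith [pow_le_pow_left₀ zero_le_one hx 2, pow_le_pow_left₀ zero_le_one hx 3,
    pow_le_pow_left₀ zero_le_one hx 4, pow_le_pow_left₀ zero_le_one hx 5]

/-- For every integer `j ≥ 1`, with `k = 400·j²` (so `k/2 = 200·j²` and `√k/10 = 2j`),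
`Σ_{u = k/2 - 2j + 1}^{k/2 + 2j - 1} C(k, u)² < 0.3·C(2k, k)`. -/
theorem central_window_probability_lt (j : ℕ) (hj : 1 ≤ j) :
    (∑ u ∈ Finset.Icc (200 * j ^ 2 - 2 * j + 1) (200 * j ^ 2 + 2 * j - 1),
        (Nat.choose (400 * j ^ 2) u : ℝ) ^ 2)
      < 0.3 * (Nat.choose (2 * (400 * j ^ 2)) (400 * j ^ 2) : ℝ) := by
  set m := 200 * j ^ 2 with hm_def
  have h2j : 2 * j ≤ m := by nlinarith
  have hk : 400 * j ^ 2 = 2 * m := by ring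
  have hcard : (#(Icc (m - 2 * j + 1) (m + 2 * j - 1)) : ℝ) = 4 * j - 1 := by
    rw [Nat.card_Icc, show m + 2 * j - 1 + 1 - (m - 2 * j + 1) = 4 * j - 1 by omega,
      Nat.cast_sub (by omega)]
    push_cast
    ring
  have hpoly : (4 * j - 1) * (m : ℝ) ^ 2 <
      0.3 * ((m : ℝ) ^ 2 + 2 * ∑ i ∈ Icc 1 (13 * j), ((m : ℝ) - i * (i + 1)) ^ 2) := by
    rw [hm_def]
    exact_mod_cast four_mul_sub_one_mul_sq_lt hj
  have hC : (0 : ℝ) < (m.centralBinom : ℝ) ^ 2 :=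
    pow_pos (by exact_mod_cast m.centralBinom_pos) 2
  have hm : (0 : ℝ) < (m : ℝ) ^ 2 := by rw [hm_def]; positivity
  rw [hk, ← Nat.centralBinom_eq_two_mul_choose]
  refine lt_of_mul_lt_mul_left ?_ hm.le
  calc (m : ℝ) ^ 2 * ∑ u ∈ Icc (m - 2 * j + 1) (m + 2 * j - 1), ((2 * m).choose u : ℝ) ^ 2
      ≤ (m : ℝ) ^ 2 * ((4 * j - 1) * (m.centralBinom : ℝ) ^ 2) := by
        rw [← hcard]
        exact mul_le_mul_of_nonneg_left (Nat.sum_sq_choose_le_card_mul_centralBinom_sq m _) hm.le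
    _ = (4 * j - 1) * (m : ℝ) ^ 2 * (m.centralBinom : ℝ) ^ 2 := by ring
    _ < 0.3 * ((m : ℝ) ^ 2 + 2 * ∑ i ∈ Icc 1 (13 * j), ((m : ℝ) - i * (i + 1)) ^ 2) *
          (m.centralBinom : ℝ) ^ 2 := mul_lt_mul_of_pos_right hpoly hC
    _ ≤ (m : ℝ) ^ 2 * (0.3 * (2 * m).centralBinom) := by
        linarith [sq_add_two_mul_sum_mul_centralBinom_sq_le (m := m) (N := 13 * j) (by nlinarith)]
end

section
/- For every integer j ≥ 1, let k = 400·j² and s = 4j (so s = √k/5). Then for all natural numbers a and b with b ≤ s and a ≤ k/2 − 2j, one has binom(k, a) · binom(k − s, k − a − b) ≤ binom(k − s, a) · binom(k, k − a − b). -/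
/-! Since `C(n, m₂) C(m₂, m₁) = C(n, m₁) C(n - m₁, m₂ - m₁)`, the ratio `C(n, m) / C(n', m)` is
nondecreasing in `m` whenever `n' ≤ n`. The theorem is the case `n = k`, `n' = k - s`,
`m₁ = a ≤ m₂ = k - a - b`, where `2a + b ≤ k` follows from the bounds on `a` and `b`. -/

theorem Nat.choose_mul_choose_le_choose_mul_choose {n' n m₁ m₂ : ℕ} (hn : n' ≤ n)
    (hm : m₁ ≤ m₂) : n.choose m₁ * n'.choose m₂ ≤ n'.choose m₁ * n.choose m₂ := by
  refine Nat.le_of_mul_le_mul_right ?_ (Nat.choose_pos hm)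
  calc n.choose m₁ * n'.choose m₂ * m₂.choose m₁
      = n.choose m₁ * n'.choose m₁ * (n' - m₁).choose (m₂ - m₁) := by
        rw [mul_assoc, Nat.choose_mul hm, mul_assoc]
    _ ≤ n.choose m₁ * n'.choose m₁ * (n - m₁).choose (m₂ - m₁) :=
        Nat.mul_le_mul_left _ (Nat.choose_le_choose _ (Nat.sub_le_sub_right hn m₁))
    _ = n'.choose m₁ * n.choose m₂ * m₂.choose m₁ := by
        rw [mul_assoc (n'.choose m₁), Nat.choose_mul hm]; ring

theorem case_probability_comparison_general (j : ℕ) (a b : ℕ)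
    (hb : b ≤ 4 * j) (ha : a ≤ 200 * j ^ 2 - 2 * j) :
    Nat.choose (400 * j ^ 2) a * Nat.choose (400 * j ^ 2 - 4 * j) (400 * j ^ 2 - a - b)
      ≤ Nat.choose (400 * j ^ 2 - 4 * j) a * Nat.choose (400 * j ^ 2) (400 * j ^ 2 - a - b) := by
  have hj : j ≤ j ^ 2 := Nat.le_self_pow two_ne_zero j
  exact Nat.choose_mul_choose_le_choose_mul_choose (Nat.sub_le _ _) (by omega)

/-- For every integer `j ≥ 1`, with `k = 400·j²` and `s = 4j = √k/5`, for all naturals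
`a, b` with `b ≤ s` and `a ≤ k/2 - 2j`,
`C(k, a)·C(k - s, k - a - b) ≤ C(k - s, a)·C(k, k - a - b)`. -/
theorem case_probability_comparison (j : ℕ) (hj : 1 ≤ j) (a b : ℕ)
    (hb : b ≤ 4 * j) (ha : a ≤ 200 * j ^ 2 - 2 * j) :
    Nat.choose (400 * j ^ 2) a * Nat.choose (400 * j ^ 2 - 4 * j) (400 * j ^ 2 - a - b)
      ≤ Nat.choose (400 * j ^ 2 - 4 * j) a * Nat.choose (400 * j ^ 2) (400 * j ^ 2 - a - b) :=
  case_probability_comparison_general j a b hb ha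
end

section
/- Let μ be the measure on ℝ equal to the measure with density x ↦ 1/(e·x²) with respect to Lebesgue measure restricted to the interval [1/e, 1), plus (1/e) times the Dirac measure at 1. Then: (i) μ is a probability measure; (ii) ∫ x dμ(x) = 2/e; (iii) for every p ∈ [0,1], p · μ({x : x ≥ p}) ≤ 1/e. Consequently, for every posted price p ∈ [0,1], the seller's regret ∫ x dμ(x) − p · μ({x : x ≥ p}) against a single buyer whose value is distributed according to μ is at least 1/e, so no pricing algorithm achieves regret strictly less than 1/e in the revenue-maximization problem. -/
/-!
`buyerMeasure` is the equal-revenue distribution on `[1/e, 1]`: its tail is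
`μ[p, ∞) = 1/(e p)` for `p ∈ [1/e, 1]`, so every such price earns exactly `1/e`, while a price
`p < 1/e` earns at most `p`. Against the density, `x` integrates to `∫ dx/(e x) = 1/e` over
`[1/e, 1)`, and the atom contributes another `1/e`; hence every price leaves regret at least
`2/e - 1/e`.
-/

open MeasureTheory

noncomputable def buyerMeasure : Measure ℝ :=
  (volume.restrict (Set.Ico (Real.exp 1)⁻¹ 1)).withDensity
      (fun x => ENNReal.ofReal (1 / (Real.exp 1 * x ^ 2)))
    + (ENNReal.ofReal (Real.exp 1)⁻¹) • Measure.dirac 1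

open Set Real

theorem setIntegral_Ico_eq_intervalIntegral {E : Type*} [NormedAddCommGroup E] [NormedSpace ℝ E]
    {f : ℝ → E} {a b : ℝ} (hab : a ≤ b) :
    ∫ x in Ico a b, f x = ∫ x in a..b, f x := by
  rw [intervalIntegral.integral_of_le hab, integral_Ico_eq_integral_Ioo,
    integral_Ioc_eq_integral_Ioo]

section InverseSquareDensity

variable {a b c : ℝ}

theorem one_div_mul_sq_eq_inv_mul_zpow (c x : ℝ) : 1 / (c * x ^ 2) = c⁻¹ * x ^ (-2 : ℤ) := by
  rw [zpow_neg, one_div, mul_inv, zpow_ofNat]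

theorem intervalIntegrable_one_div_mul_sq (h0 : (0 : ℝ) ∉ uIcc a b) :
    IntervalIntegrable (fun x => 1 / (c * x ^ 2)) volume a b := by
  simp_rw [one_div_mul_sq_eq_inv_mul_zpow]
  exact (intervalIntegral.intervalIntegrable_zpow (Or.inr h0)).const_mul _

theorem integral_Ico_one_div_mul_sq (ha : 0 < a) (hab : a ≤ b) :
    ∫ x in Ico a b, 1 / (c * x ^ 2) = (a⁻¹ - b⁻¹) / c := by
  have h0 : (0 : ℝ) ∉ uIcc a b := notMem_uIcc_of_lt ha (ha.trans_le hab)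
  simp_rw [setIntegral_Ico_eq_intervalIntegral hab, one_div_mul_sq_eq_inv_mul_zpow,
    intervalIntegral.integral_const_mul]
  rw [integral_zpow (Or.inr ⟨by norm_num, h0⟩)]
  norm_num [zpow_neg_one]
  ring

theorem lintegral_Ico_ofReal_one_div_mul_sq (hc : 0 ≤ c) (ha : 0 < a) (hab : a ≤ b) :
    ∫⁻ x in Ico a b, ENNReal.ofReal (1 / (c * x ^ 2)) = ENNReal.ofReal ((a⁻¹ - b⁻¹) / c) := by
  have hint := (intervalIntegrable_iff_integrableOn_Ico_of_le hab).1
    (intervalIntegrable_one_div_mul_sq (c := c) (notMem_uIcc_of_lt ha (ha.trans_le hab)))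
  rw [← ofReal_integral_eq_lintegral_ofReal hint
      (Filter.Eventually.of_forall fun x => by positivity),
    integral_Ico_one_div_mul_sq ha hab]

theorem toReal_ofReal_one_div_mul_sq_smul_self (hc : 0 ≤ c) {x : ℝ} (hx : x ≠ 0) :
    (ENNReal.ofReal (1 / (c * x ^ 2))).toReal • x = c⁻¹ * x⁻¹ := by
  rw [ENNReal.toReal_ofReal (by positivity), smul_eq_mul]
  field_simp

theorem integral_id_withDensity_Ico (hc : 0 ≤ c) (ha : 0 < a) (hab : a ≤ b) :
    ∫ x, x ∂(volume.restrict (Ico a b)).withDensity (fun x => ENNReal.ofReal (1 / (c * x ^ 2)))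
      = log (b / a) / c := by
  rw [integral_withDensity_eq_integral_toReal_smul (by fun_prop)
      (Filter.Eventually.of_forall fun _ => ENNReal.ofReal_lt_top),
    setIntegral_congr_fun measurableSet_Ico fun x hx =>
      toReal_ofReal_one_div_mul_sq_smul_self hc (ha.trans_le hx.1).ne',
    integral_const_mul, setIntegral_Ico_eq_intervalIntegral hab,
    integral_inv_of_pos ha (ha.trans_le hab)]
  ring

theorem integrable_id_withDensity_Ico (hc : 0 ≤ c) (ha : 0 < a) (hab : a ≤ b) :
    Integrable (fun x => x)
      ((volume.restrict (Ico a b)).withDensity fun x => ENNReal.ofReal (1 / (c * x ^ 2))) := by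
  rw [integrable_withDensity_iff_integrable_smul' (by fun_prop)
      (Filter.Eventually.of_forall fun _ => ENNReal.ofReal_lt_top)]
  refine IntegrableOn.congr_fun ?_ (fun x hx =>
    (toReal_ofReal_one_div_mul_sq_smul_self hc (ha.trans_le hx.1).ne').symm) measurableSet_Ico
  exact ((intervalIntegrable_iff_integrableOn_Ico_of_le hab).1
    (intervalIntegrable_inv_iff.2 (Or.inr (notMem_uIcc_of_lt ha (ha.trans_le hab))))).const_mul _

end InverseSquareDensity

theorem exp_one_inv_pos : 0 < (exp 1)⁻¹ :=
  inv_pos.2 (exp_pos 1)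

theorem exp_one_inv_lt_one : (exp 1)⁻¹ < 1 :=
  inv_lt_one_of_one_lt₀ (one_lt_exp_iff.2 one_pos)

theorem buyerMeasure_apply {s : Set ℝ} (hs : MeasurableSet s) :
    buyerMeasure s = (∫⁻ x in s ∩ Ico (exp 1)⁻¹ 1, ENNReal.ofReal (1 / (exp 1 * x ^ 2)))
      + ENNReal.ofReal (exp 1)⁻¹ * s.indicator 1 1 := by
  rw [buyerMeasure, Measure.add_apply, withDensity_apply _ hs, Measure.restrict_restrict hs,
    Measure.smul_apply, Measure.dirac_apply' _ hs, smul_eq_mul]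

theorem buyerMeasure_Ici {p : ℝ} (hp : (exp 1)⁻¹ ≤ p) (hp1 : p ≤ 1) :
    buyerMeasure (Ici p) = ENNReal.ofReal (1 / (exp 1 * p)) := by
  have hp0 : 0 < p := exp_one_inv_pos.trans_le hp
  have hset : Ici p ∩ Ico (exp 1)⁻¹ 1 = Ico p 1 :=
    Set.ext fun x => ⟨fun h => ⟨h.1, h.2.2⟩, fun h => ⟨h.1, hp.trans h.1, h.2⟩⟩
  rw [buyerMeasure_apply measurableSet_Ici, hset,
    lintegral_Ico_ofReal_one_div_mul_sq (exp_pos 1).le hp0 hp1, inv_one,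
    indicator_of_mem (mem_Ici.2 hp1), Pi.one_apply, mul_one,
    ← ENNReal.ofReal_add (div_nonneg (sub_nonneg.2 ((one_le_inv₀ hp0).2 hp1)) (exp_pos 1).le)
      exp_one_inv_pos.le]
  congr 1
  field_simp
  ring

instance isProbabilityMeasure_buyerMeasure : IsProbabilityMeasure buyerMeasure := by
  constructor
  rw [buyerMeasure_apply MeasurableSet.univ, univ_inter,
    lintegral_Ico_ofReal_one_div_mul_sq (exp_pos 1).le exp_one_inv_pos exp_one_inv_lt_one.le,
    indicator_of_mem (mem_univ 1), Pi.one_apply, mul_one, inv_inv, inv_one,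
    ← ENNReal.ofReal_add (div_nonneg (sub_nonneg.2 (one_le_exp zero_le_one)) (exp_pos 1).le)
      exp_one_inv_pos.le, ← ENNReal.ofReal_one]
  congr 1
  field_simp
  ring

theorem integral_id_buyerMeasure : ∫ x, x ∂buyerMeasure = 2 / exp 1 := by
  have hδ : Integrable (fun x : ℝ => x) (ENNReal.ofReal (exp 1)⁻¹ • Measure.dirac (1 : ℝ)) :=
    (integrable_dirac (by simp)).smul_measure ENNReal.ofReal_ne_top
  rw [buyerMeasure, integral_add_measure (integrable_id_withDensity_Ico (exp_pos 1).le
      exp_one_inv_pos exp_one_inv_lt_one.le) hδ,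
    integral_id_withDensity_Ico (exp_pos 1).le exp_one_inv_pos exp_one_inv_lt_one.le,
    integral_smul_measure, integral_dirac, ENNReal.toReal_ofReal exp_one_inv_pos.le,
    div_inv_eq_mul, one_mul, log_exp, smul_eq_mul, mul_one]
  ring

theorem revenue_buyerMeasure_le {p : ℝ} (hp : p ∈ Icc (0 : ℝ) 1) :
    p * (buyerMeasure {x : ℝ | p ≤ x}).toReal ≤ 1 / exp 1 := by
  rcases le_or_gt p (exp 1)⁻¹ with hlow | hhigh
  · calc p * (buyerMeasure {x : ℝ | p ≤ x}).toReal ≤ p * 1 :=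
          mul_le_mul_of_nonneg_left measureReal_le_one hp.1
      _ ≤ 1 / exp 1 := by rwa [mul_one, one_div]
  · change p * (buyerMeasure (Ici p)).toReal ≤ _
    have hp0 : 0 < p := exp_one_inv_pos.trans hhigh
    rw [buyerMeasure_Ici hhigh.le hp.2, ENNReal.toReal_ofReal (by positivity)]
    exact le_of_eq (by field_simp)

/-- The measure `buyerMeasure` is a probability measure; its mean is `2/e`; for every
posted price `p ∈ [0,1]` the expected revenue `p·μ{x : x ≥ p}` is at most `1/e`; and
consequently the seller's regret `∫ x dμ - p·μ{x : x ≥ p}` is at least `1/e` for every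
price `p ∈ [0,1]`. -/
theorem revenue_regret_lower_bound :
    IsProbabilityMeasure buyerMeasure
    ∧ (∫ x, x ∂buyerMeasure) = 2 / Real.exp 1
    ∧ (∀ p ∈ Set.Icc (0 : ℝ) 1,
        p * (buyerMeasure {x : ℝ | p ≤ x}).toReal ≤ 1 / Real.exp 1)
    ∧ (∀ p ∈ Set.Icc (0 : ℝ) 1,
        1 / Real.exp 1 ≤ (∫ x, x ∂buyerMeasure) - p * (buyerMeasure {x : ℝ | p ≤ x}).toReal) := by
  refine ⟨inferInstance, integral_id_buyerMeasure, fun p hp => revenue_buyerMeasure_le hp,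
    fun p hp => ?_⟩
  have := revenue_buyerMeasure_le hp
  rw [integral_id_buyerMeasure]
  linarith [show 2 / exp 1 = 1 / exp 1 + 1 / exp 1 by ring]
end
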